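/- If ζ ∈ ℂ is a root of the polynomial λ⁴ + (5/2)λ³ + (13/4)λ² + (5/2)λ + 1, then ζ is not a root of unity. -/

import Mathlib

/-!
Put `α = ζ + ζ⁻¹`. Dividing the quartic by `ζ²` shows `4α² + 10α + 5 = 0`, which can be rewritten as
`5/2 = -α(2α + 5)`. If `ζ` were a root of unity, then `ζ` and `ζ⁻¹` would be algebraic integers, hence so
would `α` and `-α(2α + 5)`; but `5/2` is a rational number that is not an integer.
-/

open Polynomial

theorem isIntegral_of_pow_eq_one {R A : Type*} [CommRing R] [Ring A] [Algebra R A] {x : A} {n : ℕ}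
    (hn : n ≠ 0) (hx : x ^ n = 1) : IsIntegral R x :=
  ⟨X ^ n - C 1, monic_X_pow_sub_C 1 hn, by simp [hx]⟩

theorem Rat.den_eq_one_of_isIntegral_int {K : Type*} [Field K] [CharZero K] {q : ℚ}
    (hq : IsIntegral ℤ (q : K)) : q.den = 1 := by
  rw [← eq_ratCast (algebraMap ℚ K) q, isIntegral_algebraMap_iff (algebraMap ℚ K).injective] at hq
  obtain ⟨z, rfl⟩ := IsIntegrallyClosed.isIntegral_iff.mp hq
  exact Rat.den_intCast z

/-- A root of `λ⁴ + (5/2)λ³ + (13/4)λ² + (5/2)λ + 1` is not a root of unity. -/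
theorem not_root_of_unity_13 (ζ : ℂ)
    (h : ζ ^ 4 + (5/2) * ζ ^ 3 + (13/4) * ζ ^ 2 + (5/2) * ζ + 1 = 0) :
    ∀ n : ℕ, 0 < n → ζ ^ n ≠ 1 := by
  intro n hn hζn
  have hζ0 : ζ ≠ 0 := by
    rintro rfl
    simp [hn.ne'] at hζn
  have hα : IsIntegral ℤ (ζ + ζ⁻¹) :=
    (isIntegral_of_pow_eq_one hn.ne' hζn).add
      (isIntegral_of_pow_eq_one hn.ne' (by rw [inv_pow, hζn, inv_one]))
  have five_halves_eq : ((5 / 2 : ℚ) : ℂ) = -(ζ + ζ⁻¹) * (2 * (ζ + ζ⁻¹) + 5) := by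
    field_simp
    linear_combination 2 * h
  have h_int : IsIntegral ℤ ((5 / 2 : ℚ) : ℂ) := by
    rw [five_halves_eq]
    exact hα.neg.mul (((isIntegral_natCast 2).mul hα).add (isIntegral_natCast 5))
  have := Rat.den_eq_one_of_isIntegral_int h_int
  norm_num at this
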